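/- In a cubical set with connections, if θ = Γ_t^β(τ) for some τ ∈ K_{n-1}, t ∈ [n-1], β ∈ {+,−}, and we set h = (-1)^{t+1} Γ_t^β − 2 Σ_{j=1}^{t-1} (-1)^j Γ_j^β (extended linearly to chains), then ∂_{n+1} h(θ) + h(∂_n θ) = β θ in the non-degenerate chain complex, where β denotes the sign ±1. -/

import Mathlib

/-!
Write `d_i = f_i^- - f_i^+` and `∂_{≤ m} = ∑_{i ≤ m} (-1)^i d_i` for the boundary truncated to the
first `m` directions. The face-of-connection identities give the homotopy formula
`∂ Γ_{j+1} + Γ_{j+1} ∂ = Γ_j ∂_{≤ j} + Γ_{j+1} ∂_{≤ j+1}`: the faces `j + 1` and `j + 2` of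
`Γ_{j+1}` agree and cancel, earlier faces pass through `Γ_{j+1}` as `Γ_j`, later ones as `Γ_{j+1}`.
Against the alternating coefficients of `h` the right-hand sides telescope, so that
`∂h + h∂ = ±(Γ_t ∂_{≤ t} - Γ_{t-1} ∂_{≤ t-1})`. On `θ = Γ_t τ` the relation
`Γ_{t-1} Γ_{t-1} = Γ_t Γ_{t-1}` makes `Γ_t ∂_{≤ t-1} θ = Γ_{t-1} ∂_{≤ t-1} θ`, which leaves
`∂h(θ) + h(∂θ) = -Γ_t d_t θ`. Of the two faces `f_t^± θ`, one is `τ` and the other is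
`ε_t f_t^{-β} τ`, so `-Γ_t d_t θ` is `β θ` up to the degenerate cube
`Γ_t ε_t f_t^{-β} τ = ε_{t+1} ε_t f_t^{-β} τ`.
-/

structure PrecubicalConn where
  K : ℕ → Type*
  face : Bool → ∀ n : ℕ, ℕ → K (n + 1) → K n
  degen : ∀ n : ℕ, ℕ → K n → K (n + 1)
  conn : Bool → ∀ n : ℕ, ℕ → K n → K (n + 1)

/-- The axioms of a cubical set with connections (`true` stands for `+`, `false` for `-`;
indices are 1-based with explicit range guards). -/
structure CubicalConnAxioms (P : PrecubicalConn) : Prop where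
  face_face : ∀ (α β : Bool) (n i j : ℕ) (σ : P.K (n + 2)), 1 ≤ i → i < j → j ≤ n + 2 →
    P.face α n i (P.face β (n + 1) j σ) = P.face β n (j - 1) (P.face α (n + 1) i σ)
  degen_degen : ∀ (n i j : ℕ) (σ : P.K n), 1 ≤ i → i ≤ j → j ≤ n + 1 →
    P.degen (n + 1) i (P.degen n j σ) = P.degen (n + 1) (j + 1) (P.degen n i σ)
  face_degen_lt : ∀ (α : Bool) (n i j : ℕ) (σ : P.K (n + 1)), 1 ≤ i → i < j → j ≤ n + 2 →
    P.face α (n + 1) i (P.degen (n + 1) j σ) = P.degen n (j - 1) (P.face α n i σ)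
  face_degen_gt : ∀ (α : Bool) (n i j : ℕ) (σ : P.K (n + 1)), 1 ≤ j → j < i → i ≤ n + 2 →
    P.face α (n + 1) i (P.degen (n + 1) j σ) = P.degen n j (P.face α n (i - 1) σ)
  face_degen_eq : ∀ (α : Bool) (n i : ℕ) (σ : P.K n), 1 ≤ i → i ≤ n + 1 →
    P.face α n i (P.degen n i σ) = σ
  conn_conn : ∀ (α β : Bool) (n i j : ℕ) (σ : P.K n), 1 ≤ i → i ≤ j → j ≤ n →
    P.conn α (n + 1) i (P.conn β n j σ) = P.conn β (n + 1) (j + 1) (P.conn α n i σ)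
  conn_degen_lt : ∀ (α : Bool) (n i j : ℕ) (σ : P.K n), 1 ≤ i → i < j → j ≤ n + 1 →
    P.conn α (n + 1) i (P.degen n j σ) = P.degen (n + 1) (j + 1) (P.conn α n i σ)
  conn_degen_gt : ∀ (α : Bool) (n i j : ℕ) (σ : P.K n), 1 ≤ j → j < i → i ≤ n + 1 →
    P.conn α (n + 1) i (P.degen n j σ) = P.degen (n + 1) j (P.conn α n (i - 1) σ)
  conn_degen_eq : ∀ (α : Bool) (n i : ℕ) (σ : P.K n), 1 ≤ i → i ≤ n + 1 →
    P.conn α (n + 1) i (P.degen n i σ) = P.degen (n + 1) (i + 1) (P.degen n i σ)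
  face_conn_lt : ∀ (α β : Bool) (n i j : ℕ) (σ : P.K (n + 1)), 1 ≤ i → i < j → j ≤ n + 1 →
    P.face α (n + 1) i (P.conn β (n + 1) j σ) = P.conn β n (j - 1) (P.face α n i σ)
  face_conn_gt : ∀ (α β : Bool) (n i j : ℕ) (σ : P.K (n + 1)), 1 ≤ j → j + 1 < i → i ≤ n + 2 →
    P.face α (n + 1) i (P.conn β (n + 1) j σ) = P.conn β n j (P.face α n (i - 1) σ)
  face_conn_self : ∀ (β : Bool) (n i j : ℕ) (σ : P.K n), 1 ≤ j → j ≤ n → (i = j ∨ i = j + 1) →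
    P.face β n i (P.conn β n j σ) = σ
  face_conn_opp : ∀ (α β : Bool) (n i j : ℕ) (σ : P.K (n + 1)), 1 ≤ j → j ≤ n + 1 →
    (i = j ∨ i = j + 1) → α ≠ β →
    P.face α (n + 1) i (P.conn β (n + 1) j σ) = P.degen n j (P.face α n j σ)

/-- A cube is degenerate if it is of the form `ε_i f_i^+ σ`. -/
def PrecubicalConn.Degenerate (P : PrecubicalConn) : ∀ {n : ℕ}, P.K n → Prop :=
  fun {n} σ =>
    match n, σ with
    | 0, _ => False
    | m + 1, σ => ∃ i : ℕ, 1 ≤ i ∧ i ≤ m + 1 ∧ σ = P.degen m i (P.face true m i σ)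

/-- A cube is a connection if it lies in the image of some `Γ_i^β`. -/
def PrecubicalConn.IsConn (P : PrecubicalConn) : ∀ {n : ℕ}, P.K n → Prop :=
  fun {n} σ =>
    match n, σ with
    | 0, _ => False
    | m + 1, σ => ∃ (β : Bool) (i : ℕ) (τ : P.K m), 1 ≤ i ∧ i ≤ m ∧ σ = P.conn β m i τ

/-- The linear extension of the face map `f_i^α` to the free `R`-module on the cubes. -/
noncomputable def Fmap (P : PrecubicalConn) (R : Type*) [CommRing R] (α : Bool) (n i : ℕ) :
    (P.K (n + 1) →₀ R) →ₗ[R] (P.K n →₀ R) :=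
  Finsupp.lmapDomain R R (P.face α n i)

/-- The linear extension of the connection map `Γ_i^β` to the free `R`-module on the cubes. -/
noncomputable def Gmap (P : PrecubicalConn) (R : Type*) [CommRing R] (β : Bool) (n i : ℕ) :
    (P.K n →₀ R) →ₗ[R] (P.K (n + 1) →₀ R) :=
  Finsupp.lmapDomain R R (P.conn β n i)

/-- The cubical boundary operator `∂ σ = ∑_{i=1}^{n+1} (-1)^i (f_i^- σ - f_i^+ σ)`. -/
noncomputable def bdry (P : PrecubicalConn) (R : Type*) [CommRing R] (n : ℕ) :
    (P.K (n + 1) →₀ R) →ₗ[R] (P.K n →₀ R) :=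
  ∑ i ∈ Finset.Icc 1 (n + 1), ((-1 : R) ^ i) • (Fmap P R false n i - Fmap P R true n i)

/-- The submodule generated by the degenerate cubes. -/
noncomputable def degenSub (P : PrecubicalConn) (R : Type*) [CommRing R] (n : ℕ) :
    Submodule R (P.K n →₀ R) :=
  Submodule.span R {x | ∃ σ : P.K n, P.Degenerate σ ∧ x = Finsupp.single σ 1}

/-- The submodule generated by the connection cubes. -/
noncomputable def connSub (P : PrecubicalConn) (R : Type*) [CommRing R] (n : ℕ) :
    Submodule R (P.K n →₀ R) :=
  Submodule.span R {x | ∃ σ : P.K n, P.IsConn σ ∧ x = Finsupp.single σ 1}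

/-- The sign `±1` associated to `β ∈ {+,-}`. -/
def sgn (R : Type*) [CommRing R] (β : Bool) : R := if β then 1 else -1

/-- The operator `h = (-1)^{t+1} Γ_t^β - 2 ∑_{j=1}^{t-1} (-1)^j Γ_j^β`. -/
noncomputable def hMap (P : PrecubicalConn) (R : Type*) [CommRing R] (β : Bool) (t m : ℕ) :
    (P.K m →₀ R) →ₗ[R] (P.K (m + 1) →₀ R) :=
  ((-1 : R) ^ (t + 1)) • Gmap P R β m t
    - (2 : R) • ∑ j ∈ Finset.Icc 1 (t - 1), ((-1 : R) ^ j) • Gmap P R β m j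

open Finset

lemma LinearMap.sum_comp {R M N Q ι : Type*} [Semiring R] [AddCommMonoid M] [AddCommMonoid N]
    [AddCommMonoid Q] [Module R M] [Module R N] [Module R Q] (s : Finset ι)
    (f : ι → N →ₗ[R] Q) (g : M →ₗ[R] N) :
    (∑ i ∈ s, f i) ∘ₗ g = ∑ i ∈ s, f i ∘ₗ g := by
  ext
  simp [LinearMap.sum_apply]

lemma LinearMap.comp_sum {R M N Q ι : Type*} [Semiring R] [AddCommMonoid M] [AddCommMonoid N]
    [AddCommMonoid Q] [Module R M] [Module R N] [Module R Q] (s : Finset ι) (g : N →ₗ[R] Q)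
    (f : ι → M →ₗ[R] N) : g ∘ₗ (∑ i ∈ s, f i) = ∑ i ∈ s, g ∘ₗ f i := by
  ext
  simp [LinearMap.sum_apply]

lemma Finset.sum_Icc_neg_one_pow_smul_add {R M : Type*} [CommRing R] [AddCommGroup M]
    [Module R M] (E : ℕ → M) (r : ℕ) :
    ∑ j ∈ Icc 1 r, ((-1 : R) ^ j) • (E (j - 1) + E j) + E 0 = ((-1 : R) ^ r) • E r := by
  induction r with
  | zero => simp
  | succ r ih =>
    rw [sum_Icc_succ_top (by omega), add_right_comm, ih, Nat.add_sub_cancel, pow_succ]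
    module

section CubicalChains

variable (P : PrecubicalConn) (R : Type*) [CommRing R]

noncomputable def dFace (k i : ℕ) : (P.K (k + 1) →₀ R) →ₗ[R] (P.K k →₀ R) :=
  Fmap P R false k i - Fmap P R true k i

noncomputable def partialBdry (k b : ℕ) : (P.K (k + 1) →₀ R) →ₗ[R] (P.K k →₀ R) :=
  ∑ i ∈ Icc 1 b, ((-1 : R) ^ i) • dFace P R k i

@[simp]
lemma partialBdry_zero (k : ℕ) : partialBdry P R k 0 = 0 := rfl

lemma partialBdry_succ (k b : ℕ) :
    partialBdry P R k (b + 1)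
      = partialBdry P R k b + ((-1 : R) ^ (b + 1)) • dFace P R k (b + 1) :=
  sum_Icc_succ_top (by omega) _

lemma Gmap_single (β : Bool) (k i : ℕ) (σ : P.K k) :
    Gmap P R β k i (Finsupp.single σ 1) = Finsupp.single (P.conn β k i σ) 1 :=
  Finsupp.mapDomain_single

lemma Fmap_single (α : Bool) (k i : ℕ) (σ : P.K (k + 1)) :
    Fmap P R α k i (Finsupp.single σ 1) = Finsupp.single (P.face α k i σ) 1 :=
  Finsupp.mapDomain_single

variable {P}

lemma dFace_comp_Gmap_of_le (hP : CubicalConnAxioms P) (β : Bool) {k i j : ℕ}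
    (hi : 1 ≤ i) (hij : i ≤ j) (hj : j ≤ k) :
    dFace P R (k + 1) i ∘ₗ Gmap P R β (k + 1) (j + 1)
      = Gmap P R β k j ∘ₗ dFace P R k i := by
  simp only [dFace, Fmap, Gmap, LinearMap.sub_comp, LinearMap.comp_sub,
    ← Finsupp.lmapDomain_comp]
  congr 2 <;> funext σ <;> exact hP.face_conn_lt _ β k i (j + 1) σ hi (by omega) (by omega)

lemma dFace_succ_comp_Gmap_of_lt (hP : CubicalConnAxioms P) (β : Bool) {k i j : ℕ}
    (hj : 1 ≤ j) (hji : j < i) (hi : i ≤ k + 1) :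
    dFace P R (k + 1) (i + 1) ∘ₗ Gmap P R β (k + 1) j
      = Gmap P R β k j ∘ₗ dFace P R k i := by
  simp only [dFace, Fmap, Gmap, LinearMap.sub_comp, LinearMap.comp_sub,
    ← Finsupp.lmapDomain_comp]
  congr 2 <;> funext σ <;> exact hP.face_conn_gt _ β k (i + 1) j σ hj (by omega) (by omega)

lemma dFace_succ_comp_Gmap_self (hP : CubicalConnAxioms P) (β : Bool) {k j : ℕ}
    (hj : 1 ≤ j) (hjk : j ≤ k + 1) :
    dFace P R (k + 1) (j + 1) ∘ₗ Gmap P R β (k + 1) j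
      = dFace P R (k + 1) j ∘ₗ Gmap P R β (k + 1) j := by
  have hface (α : Bool) (σ : P.K (k + 1)) :
      P.face α (k + 1) (j + 1) (P.conn β (k + 1) j σ)
        = P.face α (k + 1) j (P.conn β (k + 1) j σ) := by
    by_cases hαβ : α = β
    · subst hαβ
      rw [hP.face_conn_self α (k + 1) _ j σ hj hjk (.inr rfl),
        hP.face_conn_self α (k + 1) _ j σ hj hjk (.inl rfl)]
    · rw [hP.face_conn_opp α β k _ j σ hj hjk (.inr rfl) hαβ,
        hP.face_conn_opp α β k _ j σ hj hjk (.inl rfl) hαβ]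
  simp only [dFace, Fmap, Gmap, LinearMap.sub_comp, ← Finsupp.lmapDomain_comp]
  congr 2 <;> funext σ <;> exact hface _ σ

lemma Gmap_comp_Gmap (hP : CubicalConnAxioms P) (α β : Bool) {k i j : ℕ}
    (hi : 1 ≤ i) (hij : i ≤ j) (hj : j ≤ k) :
    Gmap P R α (k + 1) i ∘ₗ Gmap P R β k j
      = Gmap P R β (k + 1) (j + 1) ∘ₗ Gmap P R α k i := by
  simp only [Gmap, ← Finsupp.lmapDomain_comp]
  congr 1
  funext σ
  exact hP.conn_conn α β k i j σ hi hij hj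

lemma partialBdry_comp_Gmap (hP : CubicalConnAxioms P) (β : Bool) {k b j : ℕ}
    (hbj : b ≤ j) (hj : j ≤ k) :
    partialBdry P R (k + 1) b ∘ₗ Gmap P R β (k + 1) (j + 1)
      = Gmap P R β k j ∘ₗ partialBdry P R k b := by
  induction b with
  | zero => simp
  | succ b ih =>
    rw [partialBdry_succ, partialBdry_succ, LinearMap.add_comp, LinearMap.comp_add,
      LinearMap.smul_comp, LinearMap.comp_smul, ih (by omega),
      dFace_comp_Gmap_of_le R hP β (by omega) hbj hj]

lemma partialBdry_comp_Gmap_add_Gmap_comp_partialBdry (hP : CubicalConnAxioms P) (β : Bool)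
    {k j m : ℕ} (hjm : j + 1 ≤ m) (hmk : m ≤ k + 1) :
    partialBdry P R (k + 1) (m + 1) ∘ₗ Gmap P R β (k + 1) (j + 1)
        + Gmap P R β k (j + 1) ∘ₗ partialBdry P R k m
      = Gmap P R β k j ∘ₗ partialBdry P R k j
        + Gmap P R β k (j + 1) ∘ₗ partialBdry P R k (j + 1) := by
  induction m, hjm using Nat.le_induction with
  | base =>
    rw [partialBdry_succ, partialBdry_succ, LinearMap.add_comp, LinearMap.add_comp,
      LinearMap.smul_comp, LinearMap.smul_comp,
      dFace_succ_comp_Gmap_self R hP β (by omega) (by omega),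
      partialBdry_comp_Gmap R hP β le_rfl (by omega), pow_succ (-1 : R) (j + 1)]
    module
  | succ m hjm ih =>
    rw [partialBdry_succ P R (k + 1) (m + 1), partialBdry_succ P R k m, LinearMap.add_comp,
      LinearMap.comp_add, LinearMap.smul_comp, LinearMap.comp_smul,
      dFace_succ_comp_Gmap_of_lt R hP β (by omega) (by omega) (by omega), ← ih (by omega),
      pow_succ (-1 : R) (m + 1)]
    module

lemma bdry_comp_Gmap_add_Gmap_comp_bdry (hP : CubicalConnAxioms P) (β : Bool) {k j : ℕ}
    (hj : j ≤ k) :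
    bdry P R (k + 1) ∘ₗ Gmap P R β (k + 1) (j + 1) + Gmap P R β k (j + 1) ∘ₗ bdry P R k
      = Gmap P R β k j ∘ₗ partialBdry P R k j
        + Gmap P R β k (j + 1) ∘ₗ partialBdry P R k (j + 1) :=
  partialBdry_comp_Gmap_add_Gmap_comp_partialBdry R hP β (by omega) le_rfl

lemma bdry_comp_hMap_add_hMap_comp_bdry (hP : CubicalConnAxioms P) (β : Bool) {k t : ℕ}
    (ht : t ≤ k) :
    bdry P R (k + 1) ∘ₗ hMap P R β (t + 1) (k + 1) + hMap P R β (t + 1) k ∘ₗ bdry P R k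
      = ((-1 : R) ^ t) • (Gmap P R β k (t + 1) ∘ₗ partialBdry P R k (t + 1)
          - Gmap P R β k t ∘ₗ partialBdry P R k t) := by
  have hcomm : ∀ j ∈ Icc 1 t,
      ((-1 : R) ^ j) •
          (bdry P R (k + 1) ∘ₗ Gmap P R β (k + 1) j + Gmap P R β k j ∘ₗ bdry P R k)
        = ((-1 : R) ^ j) • (Gmap P R β k (j - 1) ∘ₗ partialBdry P R k (j - 1)
          + Gmap P R β k j ∘ₗ partialBdry P R k j) := by
    intro j hj
    obtain ⟨i, rfl⟩ : ∃ i, j = i + 1 := ⟨j - 1, by grind⟩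
    rw [bdry_comp_Gmap_add_Gmap_comp_bdry R hP β (by grind), Nat.add_sub_cancel]
  have htelescope := sum_Icc_neg_one_pow_smul_add (R := R)
    (fun j => Gmap P R β k j ∘ₗ partialBdry P R k j) t
  rw [partialBdry_zero, LinearMap.comp_zero, add_zero] at htelescope
  calc _ = ((-1 : R) ^ (t + 2)) • (bdry P R (k + 1) ∘ₗ Gmap P R β (k + 1) (t + 1)
            + Gmap P R β k (t + 1) ∘ₗ bdry P R k)
          - (2 : R) • ∑ j ∈ Icc 1 t, ((-1 : R) ^ j) •
            (bdry P R (k + 1) ∘ₗ Gmap P R β (k + 1) j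
              + Gmap P R β k j ∘ₗ bdry P R k) := by
        simp only [hMap, Nat.add_sub_cancel, LinearMap.comp_sub, LinearMap.sub_comp,
          LinearMap.comp_smul, LinearMap.smul_comp, LinearMap.comp_sum, LinearMap.sum_comp,
          smul_add, sum_add_distrib]
        module
    _ = ((-1 : R) ^ (t + 2)) • (Gmap P R β k t ∘ₗ partialBdry P R k t
            + Gmap P R β k (t + 1) ∘ₗ partialBdry P R k (t + 1))
          - (2 : R) • ((-1 : R) ^ t) • Gmap P R β k t ∘ₗ partialBdry P R k t := by
        rw [bdry_comp_Gmap_add_Gmap_comp_bdry R hP β ht, sum_congr rfl hcomm, htelescope]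
    _ = _ := by
        rw [pow_succ, pow_succ]
        module

lemma Gmap_comp_partialBdry_comp_Gmap (hP : CubicalConnAxioms P) (β : Bool) {k t : ℕ}
    (ht : t ≤ k) :
    Gmap P R β (k + 1) (t + 1) ∘ₗ partialBdry P R (k + 1) t ∘ₗ Gmap P R β (k + 1) (t + 1)
      = Gmap P R β (k + 1) t ∘ₗ partialBdry P R (k + 1) t
          ∘ₗ Gmap P R β (k + 1) (t + 1) := by
  rw [partialBdry_comp_Gmap R hP β le_rfl ht]
  cases t with
  | zero => simp
  | succ s =>
    rw [← LinearMap.comp_assoc, ← LinearMap.comp_assoc,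
      Gmap_comp_Gmap R hP β β (by omega) le_rfl ht]

lemma bdry_comp_hMap_add_hMap_comp_bdry_comp_Gmap (hP : CubicalConnAxioms P) (β : Bool)
    {k t : ℕ} (ht : t ≤ k) :
    (bdry P R (k + 2) ∘ₗ hMap P R β (t + 1) (k + 2)
        + hMap P R β (t + 1) (k + 1) ∘ₗ bdry P R (k + 1)) ∘ₗ Gmap P R β (k + 1) (t + 1)
      = -(Gmap P R β (k + 1) (t + 1) ∘ₗ dFace P R (k + 1) (t + 1)
          ∘ₗ Gmap P R β (k + 1) (t + 1)) := by
  rw [bdry_comp_hMap_add_hMap_comp_bdry R hP β (by omega), partialBdry_succ, LinearMap.comp_add,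
    LinearMap.smul_comp, LinearMap.sub_comp, LinearMap.add_comp, LinearMap.comp_smul,
    LinearMap.smul_comp, LinearMap.comp_assoc, LinearMap.comp_assoc, LinearMap.comp_assoc,
    Gmap_comp_partialBdry_comp_Gmap R hP β ht, pow_succ]
  rcases neg_one_pow_eq_or R t with h | h <;> rw [h] <;> module

lemma single_degen_mem_degenSub (hP : CubicalConnAxioms P) {k i : ℕ} (hi : 1 ≤ i)
    (hik : i ≤ k + 1) (σ : P.K k) :
    Finsupp.single (P.degen k i σ) (1 : R) ∈ degenSub P R (k + 1) :=
  Submodule.subset_span ⟨_, ⟨i, hi, hik, by rw [hP.face_degen_eq true k i σ hi hik]⟩, rfl⟩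

lemma Gmap_dFace_conn_add_sgn_smul_mem_degenSub (hP : CubicalConnAxioms P) (β : Bool)
    {n t : ℕ} (ht : 1 ≤ t) (htn : t ≤ n + 1) (τ : P.K (n + 1)) :
    Gmap P R β (n + 1) t (dFace P R (n + 1) t (Finsupp.single (P.conn β (n + 1) t τ) 1))
      + sgn R β • Finsupp.single (P.conn β (n + 1) t τ) 1 ∈ degenSub P R (n + 2) := by
  have hdeg (α : Bool) (hαβ : α ≠ β) :
      Finsupp.single (P.conn β (n + 1) t (P.face α (n + 1) t (P.conn β (n + 1) t τ))) (1 : R)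
        ∈ degenSub P R (n + 2) := by
    rw [hP.face_conn_opp α β n t t τ ht htn (.inl rfl) hαβ, hP.conn_degen_eq β n t _ ht htn]
    exact single_degen_mem_degenSub R hP (by omega) (by omega) _
  cases β
  · convert neg_mem (hdeg true (by decide)) using 1
    simp only [dFace, LinearMap.sub_apply, Fmap_single, map_sub, Gmap_single,
      hP.face_conn_self false (n + 1) t t τ ht htn (.inl rfl), sgn, Bool.false_eq_true,
      ↓reduceIte]
    module
  · convert hdeg false (by decide) using 1
    simp only [dFace, LinearMap.sub_apply, Fmap_single, map_sub, Gmap_single,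
      hP.face_conn_self true (n + 1) t t τ ht htn (.inl rfl), sgn, ↓reduceIte]
    module

end CubicalChains

/-- Lemma 3.5: for a connection cube `θ = Γ_t^β τ` and
`h = (-1)^{t+1} Γ_t^β - 2 ∑_{j=1}^{t-1} (-1)^j Γ_j^β`, in the non-degenerate chain
complex one has `∂ h(θ) + h(∂ θ) = β θ`. -/
theorem hMap_chain_identity (P : PrecubicalConn) (hP : CubicalConnAxioms P)
    (R : Type*) [CommRing R] (n t : ℕ) (β : Bool) (τ : P.K (n + 1))
    (ht1 : 1 ≤ t) (ht2 : t ≤ n + 1) (θ : P.K (n + 2)) (hθ : θ = P.conn β (n + 1) t τ) :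
    (bdry P R (n + 2) (hMap P R β t (n + 2) (Finsupp.single θ 1))
        + hMap P R β t (n + 1) (bdry P R (n + 1) (Finsupp.single θ 1)))
      - sgn R β • Finsupp.single θ 1
      ∈ degenSub P R (n + 2) := by
  subst hθ
  obtain ⟨s, rfl⟩ : ∃ s, t = s + 1 := ⟨t - 1, by omega⟩
  have hcomm := LinearMap.congr_fun
    (bdry_comp_hMap_add_hMap_comp_bdry_comp_Gmap R hP β (k := n) (t := s) (by omega))
    (Finsupp.single τ 1)
  simp only [LinearMap.comp_apply, LinearMap.add_apply, LinearMap.neg_apply, Gmap_single] at hcomm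
  rw [hcomm, ← neg_add']
  exact neg_mem (Gmap_dFace_conn_add_sgn_smul_mem_degenSub R hP β ht1 ht2 τ)
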